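/- Supplementary stability lemma for Theorem 9. Let S = ((x₁,y₁),…,(x_n,y_n)) ∈ (ℝ^d × {−1,+1})^n with ‖(x_j,1)‖ ≤ M for all j, fix a test point x with ‖(x,1)‖ ≤ M and y ∈ {−1,+1}, and let ŵ_S(x) and ŵ_{S^{-i}}(x) be the LLSVM solutions at x trained on S and on S with the i-th example removed, respectively (minimizers of the regularized hinge objective with kernel weights K(x_j,x,σ) ∈ [0,K_m]). Then |L(y⟨ŵ_S(x),x⟩) − L(y⟨ŵ_{S^{-i}}(x),x⟩)| ≤ 2M²K_m/(nλ). -/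

import Mathlib

open MeasureTheory Metric Filter Set
open scoped ENNReal Topology BigOperators

noncomputable section

/-- The hinge loss `L(t) = max (1 - t) 0`. -/
def hinge (t : ℝ) : ℝ := max (1 - t) 0

/-- The augmented vector `(x, 1) ∈ ℝ^(d+1)`. -/
def aug {d : ℕ} (x : EuclideanSpace ℝ (Fin d)) : EuclideanSpace ℝ (Fin (d + 1)) :=
  WithLp.toLp 2 (Fin.snoc x 1 : Fin (d + 1) → ℝ)

/-- The affine predictor `⟨w, x⟩ := ⟨w, (x,1)⟩`. -/
def pred {d : ℕ} (w : EuclideanSpace ℝ (Fin (d + 1))) (x : EuclideanSpace ℝ (Fin d)) : ℝ :=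
  inner ℝ w (aug x)

/-! `λ/2 ‖w‖² + g` is `λ`-strongly convex when `g` is convex, so
both regularized objectives grow quadratically away from their minimizers `ŵ_S` and `ŵ_{S^{-i}}`.
Adding the two growth bounds, everything cancels except the `i`-th weighted loss, which is
`K_m M`-Lipschitz, whence `‖ŵ_S - ŵ_{S^{-i}}‖ ≤ 2 K_m M / (n λ)`. At the test point the hinge
loss is `M`-Lipschitz in `w`, which gives the bound. -/

section StrongConvexity

variable {E : Type*} [NormedAddCommGroup E] [InnerProductSpace ℝ E] {s : Set E} {m : ℝ}

lemma ConvexOn.strongConvexOn_sq_norm_add {g : E → ℝ} (hg : ConvexOn ℝ s g) (m : ℝ) :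
    StrongConvexOn s m fun w ↦ m / 2 * ‖w‖ ^ 2 + g w :=
  strongConvexOn_iff_convex.2 (by simpa only [add_sub_cancel_left] using hg)

lemma StrongConvexOn.quarter_mul_sq_norm_sub_le_of_isMinOn {f : E → ℝ} {a x : E}
    (hf : StrongConvexOn s m f) (ha : a ∈ s) (hmin : IsMinOn f s a) (hx : x ∈ s) :
    m / 4 * ‖x - a‖ ^ 2 ≤ f x - f a := by
  have h₀ : (0 : ℝ) ≤ 1 / 2 := by norm_num
  have h₁ : (1 / 2 : ℝ) + 1 / 2 = 1 := by norm_num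
  have hmid := hf.2 hx ha h₀ h₀ h₁
  have hle : f a ≤ f ((1 / 2 : ℝ) • x + (1 / 2 : ℝ) • a) := hmin (hf.1 hx ha h₀ h₀ h₁)
  simp only [smul_eq_mul] at hmid
  linarith

lemma half_mul_sq_norm_sub_le_of_isMinOn {f g ρ : E → ℝ} (hf : ConvexOn ℝ s f)
    (hg : ConvexOn ℝ s g) (hfg : ∀ w, f w = g w + ρ w) {u v : E} (hus : u ∈ s) (hvs : v ∈ s)
    (hu : IsMinOn (fun w ↦ m / 2 * ‖w‖ ^ 2 + f w) s u)
    (hv : IsMinOn (fun w ↦ m / 2 * ‖w‖ ^ 2 + g w) s v) :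
    m / 2 * ‖u - v‖ ^ 2 ≤ ρ v - ρ u := by
  have hgrow_f := (hf.strongConvexOn_sq_norm_add m).quarter_mul_sq_norm_sub_le_of_isMinOn hus hu hvs
  have hgrow_g := (hg.strongConvexOn_sq_norm_add m).quarter_mul_sq_norm_sub_le_of_isMinOn hvs hv hus
  rw [norm_sub_rev, hfg, hfg] at hgrow_f
  linarith

end StrongConvexity

lemma le_of_half_mul_sq_le_mul {m c x : ℝ} (hm : 0 < m) (hc : 0 ≤ c) (hx : 0 ≤ x)
    (h : m / 2 * x ^ 2 ≤ c * x) : x ≤ 2 * c / m := by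
  rw [le_div_iff₀ hm]
  rcases hx.eq_or_lt with rfl | hx
  · linarith
  · nlinarith

section Hinge

variable {d : ℕ}

lemma convexOn_hinge : ConvexOn ℝ univ hinge :=
  ((convexOn_const 1 convex_univ).sub (concaveOn_id convex_univ)).sup
    (convexOn_const 0 convex_univ)

lemma abs_hinge_sub_hinge_le (a b : ℝ) : |hinge a - hinge b| ≤ |a - b| := by
  simpa only [hinge, sub_sub_sub_cancel_left, abs_sub_comm b a] using
    abs_max_sub_max_le_abs (1 - a) (1 - b) 0

lemma convexOn_hinge_mul_pred {y κ : ℝ} (hκ : 0 ≤ κ) (x : EuclideanSpace ℝ (Fin d)) :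
    ConvexOn ℝ univ fun w ↦ hinge (y * pred w x) * κ := by
  refine ⟨convex_univ, fun u _ v _ a b ha hb hab ↦ ?_⟩
  have hlin : y * pred (a • u + b • v) x = a • (y * pred u x) + b • (y * pred v x) := by
    simp only [pred, inner_add_left, real_inner_smul_left, smul_eq_mul]
    ring
  have hconv := convexOn_hinge.2 (mem_univ (y * pred u x)) (mem_univ (y * pred v x)) ha hb hab
  simp only [hlin, smul_eq_mul] at hconv ⊢
  calc hinge (a * (y * pred u x) + b * (y * pred v x)) * κ
      ≤ (a * hinge (y * pred u x) + b * hinge (y * pred v x)) * κ := by gcongr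
    _ = a * (hinge (y * pred u x) * κ) + b * (hinge (y * pred v x) * κ) := by ring

lemma abs_hinge_mul_pred_sub_le {y M : ℝ} {x : EuclideanSpace ℝ (Fin d)} (hy : |y| ≤ 1)
    (hx : ‖aug x‖ ≤ M) (u v : EuclideanSpace ℝ (Fin (d + 1))) :
    |hinge (y * pred u x) - hinge (y * pred v x)| ≤ ‖u - v‖ * M :=
  calc |hinge (y * pred u x) - hinge (y * pred v x)|
      ≤ |y * pred u x - y * pred v x| := abs_hinge_sub_hinge_le _ _
    _ = |y| * |inner ℝ (u - v) (aug x)| := by rw [← mul_sub, pred, pred, ← inner_sub_left, abs_mul]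
    _ ≤ 1 * (‖u - v‖ * ‖aug x‖) :=
        mul_le_mul hy (abs_real_inner_le_norm _ _) (abs_nonneg _) zero_le_one
    _ ≤ ‖u - v‖ * M := by rw [one_mul]; gcongr

lemma hinge_mul_pred_sub_le {y κ K M : ℝ} {x : EuclideanSpace ℝ (Fin d)} (hy : |y| ≤ 1)
    (hx : ‖aug x‖ ≤ M) (hκ : κ ∈ Icc 0 K) (u v : EuclideanSpace ℝ (Fin (d + 1))) :
    hinge (y * pred u x) * κ - hinge (y * pred v x) * κ ≤ K * (M * ‖u - v‖) := by
  have hM : 0 ≤ M := (norm_nonneg _).trans hx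
  calc hinge (y * pred u x) * κ - hinge (y * pred v x) * κ
      = (hinge (y * pred u x) - hinge (y * pred v x)) * κ := by ring
    _ ≤ (‖u - v‖ * M) * K :=
        mul_le_mul ((le_abs_self _).trans (abs_hinge_mul_pred_sub_le hy hx u v)) hκ.2 hκ.1
          (by positivity)
    _ = K * (M * ‖u - v‖) := by ring

end Hinge

section Risk

variable {d n : ℕ} (xs : Fin n → EuclideanSpace ℝ (Fin d)) (ys k : Fin n → ℝ)

/-- The data term of the LLSVM objective over the examples in `s`, with kernel weights
`k j = K(x_j, x, σ)`; the factor `1 / n` is kept also for `s = univ.erase i`. -/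
def weightedHingeRisk (s : Finset (Fin n)) (w : EuclideanSpace ℝ (Fin (d + 1))) : ℝ :=
  (1 / n) * ∑ j ∈ s, hinge (ys j * pred w (xs j)) * k j

lemma weightedHingeRisk_eq_erase_add {s : Finset (Fin n)} {i : Fin n} (hi : i ∈ s)
    (w : EuclideanSpace ℝ (Fin (d + 1))) :
    weightedHingeRisk xs ys k s w
      = weightedHingeRisk xs ys k (s.erase i) w + 1 / n * (hinge (ys i * pred w (xs i)) * k i) := by
  rw [weightedHingeRisk, weightedHingeRisk, ← mul_add, Finset.sum_erase_add _ _ hi]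

variable {xs ys k}

lemma convexOn_weightedHingeRisk {s : Finset (Fin n)} (hk : ∀ j ∈ s, 0 ≤ k j) :
    ConvexOn ℝ univ (weightedHingeRisk xs ys k s) := by
  have hsum : ConvexOn ℝ univ fun w ↦ ∑ j ∈ s, hinge (ys j * pred w (xs j)) * k j := by
    rw [← Finset.sum_fn]
    exact Finset.sum_induction _ (ConvexOn ℝ univ) (fun _ _ ↦ ConvexOn.add)
      (convexOn_const 0 convex_univ) fun j hj ↦ convexOn_hinge_mul_pred (hk j hj) (xs j)
  exact hsum.smul (by positivity)

end Risk

theorem llsvm_loss_stability_at_test_point_general {d n : ℕ} (lam M Km : ℝ)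
    (hlam : 0 < lam)
    (xs : Fin n → EuclideanSpace ℝ (Fin d)) (ys k : Fin n → ℝ)
    (hys : ∀ j, ys j = 1 ∨ ys j = -1)
    (hM : ∀ j, ‖aug (xs j)‖ ≤ M)
    (hk : ∀ j, k j ∈ Set.Icc (0 : ℝ) Km)
    (i : Fin n) (what whati : EuclideanSpace ℝ (Fin (d + 1)))
    (hwhat : ∀ w, lam / 2 * ‖what‖ ^ 2 + (1 / n) * ∑ j, hinge (ys j * pred what (xs j)) * k j
      ≤ lam / 2 * ‖w‖ ^ 2 + (1 / n) * ∑ j, hinge (ys j * pred w (xs j)) * k j)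
    (hwhati : ∀ w, lam / 2 * ‖whati‖ ^ 2
        + (1 / n) * ∑ j ∈ Finset.univ.erase i, hinge (ys j * pred whati (xs j)) * k j
      ≤ lam / 2 * ‖w‖ ^ 2
        + (1 / n) * ∑ j ∈ Finset.univ.erase i, hinge (ys j * pred w (xs j)) * k j)
    (x : EuclideanSpace ℝ (Fin d)) (y : ℝ)
    (hy : y = 1 ∨ y = -1) (hx : ‖aug x‖ ≤ M) :
    |hinge (y * pred what x) - hinge (y * pred whati x)| ≤ 2 * M ^ 2 * Km / (n * lam) := by
  have hn : (0 : ℝ) < n := Nat.cast_pos.2 i.pos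
  have hM0 : 0 ≤ M := (norm_nonneg _).trans hx
  have hKm : 0 ≤ Km := (hk i).1.trans (hk i).2
  have hrisk (s : Finset (Fin n)) : ConvexOn ℝ univ (weightedHingeRisk xs ys k s) :=
    convexOn_weightedHingeRisk fun j _ ↦ (hk j).1
  have hgap := half_mul_sq_norm_sub_le_of_isMinOn (hrisk _) (hrisk _)
    (weightedHingeRisk_eq_erase_add xs ys k (Finset.mem_univ i)) (mem_univ what)
    (mem_univ whati) (isMinOn_univ_iff.2 hwhat) (isMinOn_univ_iff.2 hwhati)
  have hyi : |ys i| ≤ 1 := by rcases hys i with h | h <;> simp [h]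
  have hloss := mul_le_mul_of_nonneg_left
    (hinge_mul_pred_sub_le hyi (hM i) (hk i) whati what) (by positivity : (0 : ℝ) ≤ 1 / n)
  rw [mul_sub, norm_sub_rev] at hloss
  have hD : ‖what - whati‖ ≤ 2 * (1 / n * (Km * M)) / lam :=
    le_of_half_mul_sq_le_mul hlam (by positivity) (norm_nonneg _) (by linarith)
  have hy1 : |y| ≤ 1 := by rcases hy with h | h <;> simp [h]
  calc |hinge (y * pred what x) - hinge (y * pred whati x)|
      ≤ ‖what - whati‖ * M := abs_hinge_mul_pred_sub_le hy1 hx what whati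
    _ ≤ 2 * (1 / n * (Km * M)) / lam * M := by gcongr
    _ = 2 * M ^ 2 * Km / (n * lam) := by field_simp

/-- Supplementary stability lemma for Theorem 9: at a fixed bounded test point, the
hinge loss of the LLSVM solution changes by at most `2 M² K_m / (n λ)` when one
training example is removed.  Here `k j = K(x_j, x, σ) ∈ [0, K_m]` are the kernel
weights at the test point `x`. -/
theorem llsvm_loss_stability_at_test_point {d n : ℕ} (hn : 1 ≤ n) (lam M Km : ℝ)
    (hlam : 0 < lam)
    (xs : Fin n → EuclideanSpace ℝ (Fin d)) (ys k : Fin n → ℝ)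
    (hys : ∀ j, ys j = 1 ∨ ys j = -1)
    (hM : ∀ j, ‖aug (xs j)‖ ≤ M)
    (hk : ∀ j, k j ∈ Set.Icc (0 : ℝ) Km)
    (i : Fin n) (what whati : EuclideanSpace ℝ (Fin (d + 1)))
    (hwhat : ∀ w, lam / 2 * ‖what‖ ^ 2 + (1 / n) * ∑ j, hinge (ys j * pred what (xs j)) * k j
      ≤ lam / 2 * ‖w‖ ^ 2 + (1 / n) * ∑ j, hinge (ys j * pred w (xs j)) * k j)
    (hwhati : ∀ w, lam / 2 * ‖whati‖ ^ 2
        + (1 / n) * ∑ j ∈ Finset.univ.erase i, hinge (ys j * pred whati (xs j)) * k j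
      ≤ lam / 2 * ‖w‖ ^ 2
        + (1 / n) * ∑ j ∈ Finset.univ.erase i, hinge (ys j * pred w (xs j)) * k j)
    (x : EuclideanSpace ℝ (Fin d)) (y : ℝ)
    (hy : y = 1 ∨ y = -1) (hx : ‖aug x‖ ≤ M) :
    |hinge (y * pred what x) - hinge (y * pred whati x)| ≤ 2 * M ^ 2 * Km / (n * lam) :=
  llsvm_loss_stability_at_test_point_general lam M Km hlam xs ys k hys hM hk i what whati hwhat
    hwhati x y hy hx
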